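/- arXiv:1506.07757 — 3 statements merged into one kernel-verified Lean document; each statement's English description precedes it below -/
import Mathlib

section
/- Let vol₀(E) denote the Lebesgue measure of R(E) = {(x,y) ∈ ℝ² : exp(x) + exp(y) + exp(−x−y) ≤ exp(E)}. Then vol₀(E)/E² tends to 9/2 as E → +∞. -/
/-! Since every exponential is smaller than the sum, `R(E)` lies inside the tropical triangle
`max (x, y, -x - y) < E`; conversely, if each of the three exponentials is below `exp E / 3` the
point lies in `R(E)`, so `R(E)` contains the triangle `max (x, y, -x - y) < E - log 3`. The two
triangles have areas `9 E² / 2` and `9 (E - log 3)² / 2`. -/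

open Real Filter MeasureTheory Set Topology

def triangle (a b c : ℝ) : Set (ℝ × ℝ) := {p | p.1 < a ∧ p.2 < b ∧ -p.1 - p.2 < c}

lemma triangle_eq_regionBetween (a b c : ℝ) :
    triangle a b c = regionBetween (fun x ↦ -c - x) (fun _ ↦ b) (Ioo (-(b + c)) a) := by
  ext ⟨x, y⟩
  simp only [triangle, regionBetween, mem_ofPred_eq, mem_Ioo]
  constructor
  · rintro ⟨hx, hy, hxy⟩
    exact ⟨⟨by linarith, hx⟩, by linarith, hy⟩
  · rintro ⟨⟨-, hx⟩, hxy, hy⟩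
    exact ⟨hx, hy, by linarith⟩

lemma volume_triangle {a b c : ℝ} (h : 0 ≤ a + b + c) :
    volume (triangle a b c) = ENNReal.ofReal ((a + b + c) ^ 2 / 2) := by
  have hint {f : ℝ → ℝ} (hf : Continuous f) : IntegrableOn f (Ioo (-(b + c)) a) :=
    hf.integrableOn_Icc.mono_set Ioo_subset_Icc_self
  rw [triangle_eq_regionBetween, Measure.volume_eq_prod,
    volume_regionBetween_eq_integral (hint (by fun_prop)) (hint (by fun_prop)) measurableSet_Ioo
      fun x hx ↦ by linarith [hx.1],
    ← integral_Ioc_eq_integral_Ioo, ← intervalIntegral.integral_of_le (by linarith)]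
  have hshift := intervalIntegral.integral_comp_add_left (fun x : ℝ ↦ x) (b + c)
    (a := -(b + c)) (b := a)
  simp only [Pi.sub_apply, integral_id] at hshift ⊢
  congr 1
  convert hshift using 2
  · ext x; ring
  · ring

def localP2Region (E : ℝ) : Set (ℝ × ℝ) :=
  {p | exp p.1 + exp p.2 + exp (-p.1 - p.2) ≤ exp E}

lemma localP2Region_subset_triangle (E : ℝ) : localP2Region E ⊆ triangle E E E := by
  intro p hp
  change exp p.1 + exp p.2 + exp (-p.1 - p.2) ≤ exp E at hp
  have := exp_pos p.1; have := exp_pos p.2; have := exp_pos (-p.1 - p.2)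
  refine ⟨exp_lt_exp.mp ?_, exp_lt_exp.mp ?_, exp_lt_exp.mp ?_⟩ <;> linarith

lemma triangle_subset_localP2Region (E : ℝ) :
    triangle (E - log 3) (E - log 3) (E - log 3) ⊆ localP2Region E := by
  rintro p ⟨h₁, h₂, h₃⟩
  have hexp : exp (E - log 3) = exp E / 3 := by rw [exp_sub, exp_log three_pos]
  replace h₁ := exp_lt_exp.mpr h₁
  replace h₂ := exp_lt_exp.mpr h₂
  replace h₃ := exp_lt_exp.mpr h₃
  rw [hexp] at h₁ h₂ h₃
  show exp p.1 + exp p.2 + exp (-p.1 - p.2) ≤ exp E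
  linarith

lemma tendsto_add_sq_div_sq (k : ℝ) : Tendsto (fun x : ℝ ↦ (x + k) ^ 2 / x ^ 2) atTop (𝓝 1) := by
  have h : Tendsto (fun x : ℝ ↦ (1 + k / x) ^ 2) atTop (𝓝 ((1 + 0) ^ 2)) :=
    (tendsto_const_nhds.add (tendsto_const_nhds.div_atTop tendsto_id)).pow 2
  rw [add_zero, one_pow] at h
  refine h.congr' ?_
  filter_upwards [eventually_ne_atTop 0] with x hx
  field_simp

lemma volume_localP2Region_le {E : ℝ} (hE : 0 ≤ E) :
    volume (localP2Region E) ≤ ENNReal.ofReal (9 / 2 * E ^ 2) :=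
  calc volume (localP2Region E) ≤ volume (triangle E E E) :=
        measure_mono (localP2Region_subset_triangle E)
    _ = ENNReal.ofReal (9 / 2 * E ^ 2) := by rw [volume_triangle (by linarith)]; ring_nf

lemma le_volume_localP2Region {E : ℝ} (hE : log 3 ≤ E) :
    ENNReal.ofReal (9 / 2 * (E - log 3) ^ 2) ≤ volume (localP2Region E) :=
  calc ENNReal.ofReal (9 / 2 * (E - log 3) ^ 2)
      = volume (triangle (E - log 3) (E - log 3) (E - log 3)) := by
        rw [volume_triangle (by linarith)]; ring_nf
    _ ≤ volume (localP2Region E) := measure_mono (triangle_subset_localP2Region E)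

theorem vol_localP2_asymptotics :
    Filter.Tendsto
      (fun E : ℝ =>
        (MeasureTheory.volume {p : ℝ × ℝ |
          Real.exp p.1 + Real.exp p.2 + Real.exp (-p.1 - p.2) ≤ Real.exp E}).toReal
          / E ^ 2)
      Filter.atTop (nhds (9 / 2)) := by
  change Tendsto (fun E ↦ (volume (localP2Region E)).toReal / E ^ 2) atTop (𝓝 (9 / 2))
  have hlower : Tendsto (fun E : ℝ ↦ 9 / 2 * ((E + -log 3) ^ 2 / E ^ 2)) atTop (𝓝 (9 / 2)) := by
    simpa using (tendsto_add_sq_div_sq (-log 3)).const_mul (9 / 2)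
  refine tendsto_of_tendsto_of_tendsto_of_le_of_le' hlower tendsto_const_nhds ?_ ?_
  · filter_upwards [eventually_ge_atTop (log 3)] with E hE
    have hfin : volume (localP2Region E) ≠ ⊤ := ne_top_of_le_ne_top ENNReal.ofReal_ne_top
      (volume_localP2Region_le ((log_pos (by norm_num)).le.trans hE))
    rw [← mul_div_assoc, ← sub_eq_add_neg]
    gcongr
    exact (ENNReal.ofReal_le_iff_le_toReal hfin).mp (le_volume_localP2Region hE)
  · filter_upwards [eventually_ge_atTop 0] with E hE
    exact div_le_of_le_mul₀ (sq_nonneg E) (by norm_num)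
      (ENNReal.toReal_le_of_le_ofReal (by positivity) (volume_localP2Region_le hE))
end

section
/- For all real numbers m, n > 0, let vol_{m,n}(E) denote the Lebesgue measure of R_{m,n}(E) = {(x,y) ∈ ℝ² : exp(x) + exp(y) + exp(−m·x − n·y) ≤ exp(E)}. Then vol_{m,n}(E)/E² tends to (m+n+1)²/(2mn) as E → +∞. -/
/-!
Taking logarithms, the sublevel set `exp x + exp y + exp (-m x - n y) ≤ exp E` is squeezed between
the tropical triangles `max (x, y, -m x - n y) < E - log 3` and `max (x, y, -m x - n y) < E`. The
triangle of level `c ≥ 0` is the region under a linear graph over `(-(n + 1) c / m, c)`, of area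
`(m + n + 1)² c² / (2 m n)`, and `(E - log 3)² / E² → 1`.
-/

open Real Filter MeasureTheory Set Topology

def tropicalTriangle (m n c : ℝ) : Set (ℝ × ℝ) :=
  {p | p.1 < c ∧ p.2 < c ∧ -m * p.1 - n * p.2 < c}

def threeTermSublevel (m n E : ℝ) : Set (ℝ × ℝ) :=
  {p | exp p.1 + exp p.2 + exp (-m * p.1 - n * p.2) ≤ exp E}

lemma intervalIntegral_const_add_mul (a b k l : ℝ) :
    ∫ x in a..b, (k + l * x) = (b - a) * k + l * ((b ^ 2 - a ^ 2) / 2) := by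
  rw [intervalIntegral.integral_add intervalIntegrable_const
    ((continuous_const_mul l).intervalIntegrable _ _), intervalIntegral.integral_const_mul]
  simp

section tropicalTriangle

variable {m n : ℝ}

lemma tropicalTriangle_mono (m n : ℝ) {c c' : ℝ} (h : c ≤ c') :
    tropicalTriangle m n c ⊆ tropicalTriangle m n c' :=
  fun _ ⟨h₁, h₂, h₃⟩ => ⟨h₁.trans_le h, h₂.trans_le h, h₃.trans_le h⟩

lemma tropicalTriangle_eq_regionBetween (hm : 0 < m) (hn : 0 < n) (c : ℝ) :
    tropicalTriangle m n c =
      regionBetween (fun x => (-c - m * x) / n) (fun _ => c) (Ioo (-(n + 1) * c / m) c) := by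
  ext ⟨x, y⟩
  simp only [tropicalTriangle, regionBetween, mem_ofPred_eq, mem_Ioo, div_lt_iff₀ hn,
    div_lt_iff₀ hm]
  constructor
  · rintro ⟨hx, hy, hxy⟩
    exact ⟨⟨by nlinarith, hx⟩, by linarith, hy⟩
  · rintro ⟨⟨-, hx⟩, hxy, hy⟩
    exact ⟨hx, hy, by linarith⟩

lemma volume_tropicalTriangle (hm : 0 < m) (hn : 0 < n) {c : ℝ} (hc : 0 ≤ c) :
    volume (tropicalTriangle m n c) = .ofReal ((m + n + 1) ^ 2 / (2 * m * n) * c ^ 2) := by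
  set a := -(n + 1) * c / m
  have hac : a ≤ c := by
    rw [div_le_iff₀ hm]
    nlinarith
  have hwidth : ∀ x, c - (-c - m * x) / n = (c + c / n) + m / n * x := fun x => by
    field_simp
    ring
  rw [tropicalTriangle_eq_regionBetween hm hn, Measure.volume_eq_prod,
    volume_regionBetween_eq_integral
      ((Continuous.integrableOn_Icc (by fun_prop)).mono_set Ioo_subset_Icc_self)
      ((Continuous.integrableOn_Icc (by fun_prop)).mono_set Ioo_subset_Icc_self)
      measurableSet_Ioo (fun x hx => ?_), ← integral_Ioc_eq_integral_Ioo,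
    ← intervalIntegral.integral_of_le hac]
  · simp only [Pi.sub_apply, hwidth, intervalIntegral_const_add_mul]
    congr 1
    simp only [a]
    field_simp
    ring
  · have hax := hx.1
    rw [div_lt_iff₀ hm] at hax
    rw [div_le_iff₀ hn]
    linarith

lemma volume_tropicalTriangle_ne_top (hm : 0 < m) (hn : 0 < n) (c : ℝ) :
    volume (tropicalTriangle m n c) ≠ ⊤ :=
  measure_ne_top_of_subset (tropicalTriangle_mono m n (le_abs_self c))
    ((volume_tropicalTriangle hm hn (abs_nonneg c)).trans_ne ENNReal.ofReal_ne_top)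

lemma measureReal_tropicalTriangle (hm : 0 < m) (hn : 0 < n) {c : ℝ} (hc : 0 ≤ c) :
    volume.real (tropicalTriangle m n c) = (m + n + 1) ^ 2 / (2 * m * n) * c ^ 2 := by
  rw [measureReal_def, volume_tropicalTriangle hm hn hc, ENNReal.toReal_ofReal (by positivity)]

end tropicalTriangle

lemma threeTermSublevel_subset_tropicalTriangle (m n E : ℝ) :
    threeTermSublevel m n E ⊆ tropicalTriangle m n E := by
  intro p hp
  have h₁ := exp_pos p.1
  have h₂ := exp_pos p.2
  have h₃ := exp_pos (-m * p.1 - n * p.2)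
  exact ⟨exp_lt_exp.1 (by linarith [hp.out]), exp_lt_exp.1 (by linarith [hp.out]),
    exp_lt_exp.1 (by linarith [hp.out])⟩

lemma tropicalTriangle_sub_log_three_subset_threeTermSublevel (m n E : ℝ) :
    tropicalTriangle m n (E - log 3) ⊆ threeTermSublevel m n E := by
  rintro p ⟨h₁, h₂, h₃⟩
  have hthird : exp (E - log 3) = exp E / 3 := by rw [exp_sub, exp_log three_pos]
  have := exp_lt_exp.2 h₁
  have := exp_lt_exp.2 h₂
  have := exp_lt_exp.2 h₃
  show exp p.1 + exp p.2 + exp (-m * p.1 - n * p.2) ≤ exp E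
  linarith

lemma tendsto_div_sq_of_le_of_le {f : ℝ → ℝ} {C k : ℝ}
    (hlow : ∀ᶠ E in atTop, C * (E - k) ^ 2 ≤ f E) (hup : ∀ᶠ E in atTop, f E ≤ C * E ^ 2) :
    Tendsto (fun E => f E / E ^ 2) atTop (𝓝 C) := by
  have hlim : Tendsto (fun E : ℝ => C * (1 - k * E⁻¹) ^ 2) atTop (𝓝 C) := by
    simpa using (((tendsto_inv_atTop_zero.const_mul k).const_sub 1).pow 2).const_mul C
  refine tendsto_of_tendsto_of_tendsto_of_le_of_le' hlim tendsto_const_nhds ?_ ?_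
  · filter_upwards [hlow, eventually_gt_atTop 0] with E hE hpos
    have hrescale : C * (1 - k * E⁻¹) ^ 2 * E ^ 2 = C * (E - k) ^ 2 := by
      field_simp
    rwa [le_div_iff₀ (by positivity), hrescale]
  · filter_upwards [hup, eventually_gt_atTop 0] with E hE hpos
    rwa [div_le_iff₀ (by positivity)]

theorem vol_three_term_asymptotics (m n : ℝ) (hm : 0 < m) (hn : 0 < n) :
    Filter.Tendsto
      (fun E : ℝ =>
        (MeasureTheory.volume {p : ℝ × ℝ |
          Real.exp p.1 + Real.exp p.2 + Real.exp (-m * p.1 - n * p.2) ≤ Real.exp E}).toReal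
          / E ^ 2)
      Filter.atTop (nhds ((m + n + 1) ^ 2 / (2 * m * n))) := by
  refine tendsto_div_sq_of_le_of_le (k := log 3) ?_ ?_
  · filter_upwards [eventually_ge_atTop (log 3)] with E hE
    rw [← measureReal_tropicalTriangle hm hn (sub_nonneg.2 hE)]
    exact measureReal_mono (tropicalTriangle_sub_log_three_subset_threeTermSublevel m n E)
      (measure_ne_top_of_subset (threeTermSublevel_subset_tropicalTriangle m n E)
        (volume_tropicalTriangle_ne_top hm hn E))
  · filter_upwards [eventually_ge_atTop 0] with E hE
    rw [← measureReal_tropicalTriangle hm hn hE]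
    exact measureReal_mono (threeTermSublevel_subset_tropicalTriangle m n E)
      (volume_tropicalTriangle_ne_top hm hn E)
end

section
/- Let ϖ₁(z) = log z + ∑_{j≥1} 3·(3j−1)!/(j!)³·(−z)^j for real z ∈ (0, 1/27), and let θ denote the differential operator θf(z) = z·f′(z). Then ϖ₁ satisfies the Picard–Fuchs equation θ³ϖ₁(z) + 3z·(3θ+2)(3θ+1)θ ϖ₁(z) = 0 for all z ∈ (0, 1/27). -/
/-!
`θ` acts diagonally on monomials, `θ zᵐ = m zᵐ`, and `θ log z = 1`. Hence
`θϖ₁ = 1 + ∑ m c_m (-z)ᵐ` and `θᵏϖ₁ = ∑ mᵏ c_m (-z)ᵐ` for `k ≥ 2`, termwise differentiation being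
justified by `c_m ≤ 27ᵐ`. The coefficient of `zᵐ` in the equation then vanishes by the recurrence
`m³ c_m = 3 (3m-1)(3m-2)(m-1) c_{m-1}`, and that of `z` because the constant `1` coming from
`log z` balances `c_1 = 6`.
-/

open Real

/-- The coefficients `c_j = 3 (3j-1)! / (j!)^3` of the logarithmic period of local P². -/
noncomputable def localP2c (j : ℕ) : ℝ :=
  3 * (Nat.factorial (3 * j - 1) : ℝ) / ((Nat.factorial j : ℝ)) ^ 3

/-- The power-series part `ϖ̃₁(z) = ∑_{j ≥ 1} c_j (-z)^j` of the logarithmic period. -/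
noncomputable def w1tilde (z : ℝ) : ℝ := ∑' j : ℕ, localP2c (j + 1) * (-z) ^ (j + 1)

/-- The logarithmic period `ϖ₁(z) = log z + ϖ̃₁(z)` of local P². -/
noncomputable def w1 (z : ℝ) : ℝ := Real.log z + w1tilde z

/-- The operator `θ = z d/dz`. -/
noncomputable def theta (f : ℝ → ℝ) : ℝ → ℝ := fun z => z * deriv f z

/-- `(3θ+1)θ` applied to `ϖ₁`. -/
noncomputable def pf1 : ℝ → ℝ := fun z => 3 * theta (theta w1) z + theta w1 z

/-- `(3θ+2)(3θ+1)θ` applied to `ϖ₁`. -/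
noncomputable def pf2 : ℝ → ℝ := fun z => 3 * theta pf1 z + 2 * pf1 z

open Set Filter Topology

lemma summable_add_one_pow_mul_geometric {y : ℝ} (hy : ‖y‖ < 1) (k : ℕ) :
    Summable fun n : ℕ => ((n : ℝ) + 1) ^ k * y ^ n := by
  have hsum : Summable fun n : ℕ =>
      ∑ i ∈ Finset.range (k + 1), (k.choose i : ℝ) * ((n : ℝ) ^ i * y ^ n) :=
    summable_sum fun i _ => (summable_pow_mul_geometric_of_norm_lt_one i hy).mul_left _
  refine hsum.congr fun n => ?_
  rw [add_pow, Finset.sum_mul]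
  exact Finset.sum_congr rfl fun i _ => by ring

section Theta

variable {f g : ℝ → ℝ} {x : ℝ}

lemma theta_eq_of_hasDerivAt {f' : ℝ} (h : HasDerivAt f f' x) : theta f x = x * f' := by
  rw [theta, h.deriv]

lemma Filter.EventuallyEq.theta_eq (h : f =ᶠ[𝓝 x] g) : theta f x = theta g x := by
  rw [theta, theta, h.deriv_eq]

lemma theta_eqOn {s : Set ℝ} (hs : IsOpen s) (h : EqOn f g s) : EqOn (theta f) (theta g) s :=
  fun _ hx => (eventuallyEq_of_mem (hs.mem_nhds hx) h).theta_eq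

lemma theta_add (hf : DifferentiableAt ℝ f x) (hg : DifferentiableAt ℝ g x) :
    theta (fun y => f y + g y) x = theta f x + theta g x := by
  simp only [theta, deriv_fun_add hf hg, mul_add]

lemma theta_const_mul (c : ℝ) : theta (fun y => c * f y) x = c * theta f x := by
  simp only [theta, deriv_const_mul_field', mul_left_comm]

lemma theta_const_add (c : ℝ) : theta (fun y => c + f y) x = theta f x := by
  simp only [theta, deriv_const_add']

lemma theta_log (hx : x ≠ 0) : theta log x = 1 := by
  rw [theta, deriv_log, mul_inv_cancel₀ hx]

end Theta

/-- `θᵏ` applied termwise to `∑ₙ aₙ x^(n+1)`. -/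
noncomputable def thetaPowSeries (a : ℕ → ℝ) (k : ℕ) (x : ℝ) : ℝ :=
  ∑' n, a n * ((n : ℝ) + 1) ^ k * x ^ (n + 1)

section ThetaPowSeries

variable {a : ℕ → ℝ} {C R : ℝ} (hR : 0 ≤ R) (ha : ∀ n, ‖a n‖ ≤ C * R ^ n)
include hR ha

lemma summable_norm_mul_add_one_pow_mul_pow (k : ℕ) {r : ℝ} (hr : 0 ≤ r) (hRr : R * r < 1) :
    Summable fun n : ℕ => ‖a n‖ * ((n : ℝ) + 1) ^ k * r ^ n := by
  have hRr' : ‖R * r‖ < 1 := by rwa [Real.norm_of_nonneg (mul_nonneg hR hr)]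
  refine .of_nonneg_of_le (fun n => by positivity) (fun n => ?_)
    ((summable_add_one_pow_mul_geometric hRr' k).mul_left C)
  calc ‖a n‖ * ((n : ℝ) + 1) ^ k * r ^ n ≤ C * R ^ n * ((n : ℝ) + 1) ^ k * r ^ n := by
        gcongr; exact ha n
    _ = C * (((n : ℝ) + 1) ^ k * (R * r) ^ n) := by ring

lemma summable_thetaPowSeries (k : ℕ) {x : ℝ} (hx : R * |x| < 1) :
    Summable fun n : ℕ => a n * ((n : ℝ) + 1) ^ k * x ^ (n + 1) := by
  refine .of_norm (((summable_norm_mul_add_one_pow_mul_pow hR ha k (abs_nonneg x) hx).mul_left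
    |x|).congr fun n => ?_)
  rw [norm_mul, norm_mul, norm_pow, norm_pow, Real.norm_eq_abs x,
    Real.norm_of_nonneg (by positivity : (0 : ℝ) ≤ (n : ℝ) + 1), pow_succ]
  ring

lemma hasDerivAt_thetaPowSeries (k : ℕ) {x : ℝ} (hx : R * |x| < 1) :
    HasDerivAt (thetaPowSeries a k) (∑' n, a n * ((n : ℝ) + 1) ^ (k + 1) * x ^ n) x := by
  set r := (1 + |x|) / (1 + R)
  have hRr : R * r < 1 := by
    rw [mul_div_assoc', div_lt_one (by linarith)]; linarith
  have hxr : |x| < r := by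
    rw [lt_div_iff₀ (by linarith)]; linarith
  have hx_mem : x ∈ Ioo (-r) r := abs_lt.mp hxr
  have hderiv := hasDerivAt_tsum_of_isPreconnected
    (g := fun n y => a n * ((n : ℝ) + 1) ^ k * y ^ (n + 1))
    (g' := fun n y => a n * ((n : ℝ) + 1) ^ k * (((n : ℝ) + 1) * y ^ n))
    (summable_norm_mul_add_one_pow_mul_pow hR ha (k + 1) ((abs_nonneg x).trans hxr.le) hRr)
    isOpen_Ioo isPreconnected_Ioo
    (fun n y _ => by simpa using (hasDerivAt_pow (n + 1) y).const_mul (a n * ((n : ℝ) + 1) ^ k))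
    (fun n y hy => ?_) hx_mem (summable_thetaPowSeries hR ha k hx) hx_mem
  · exact hderiv.congr_deriv (tsum_congr fun n => by ring)
  · have hyr : |y| ≤ r := abs_le.mpr ⟨hy.1.le, hy.2.le⟩
    rw [norm_mul, norm_mul, norm_mul, norm_pow, norm_pow, Real.norm_eq_abs y,
      Real.norm_of_nonneg (by positivity : (0 : ℝ) ≤ (n : ℝ) + 1)]
    calc ‖a n‖ * ((n : ℝ) + 1) ^ k * (((n : ℝ) + 1) * |y| ^ n)
        = ‖a n‖ * ((n : ℝ) + 1) ^ (k + 1) * |y| ^ n := by ring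
      _ ≤ ‖a n‖ * ((n : ℝ) + 1) ^ (k + 1) * r ^ n := by gcongr

lemma theta_thetaPowSeries (k : ℕ) {x : ℝ} (hx : R * |x| < 1) :
    theta (thetaPowSeries a k) x = thetaPowSeries a (k + 1) x := by
  rw [theta_eq_of_hasDerivAt (hasDerivAt_thetaPowSeries hR ha k hx), thetaPowSeries,
    ← tsum_mul_left]
  exact tsum_congr fun n => by ring

end ThetaPowSeries

lemma factorial_three_mul_le (j : ℕ) : (3 * j).factorial ≤ 27 ^ j * j.factorial ^ 3 := by
  induction j with
  | zero => simp
  | succ n ih =>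
    have hsplit : (3 * (n + 1)).factorial =
        (3 * n + 3) * ((3 * n + 2) * ((3 * n + 1) * (3 * n).factorial)) := by
      simp only [show 3 * (n + 1) = 3 * n + 2 + 1 by ring, Nat.factorial_succ]
    calc (3 * (n + 1)).factorial
        ≤ (3 * (n + 1)) * ((3 * (n + 1)) * ((3 * (n + 1)) * (27 ^ n * n.factorial ^ 3))) := by
          rw [hsplit]; gcongr <;> omega
      _ = 27 ^ (n + 1) * (n + 1).factorial ^ 3 := by rw [Nat.factorial_succ]; ring

lemma localP2c_succ_le (n : ℕ) : localP2c (n + 1) ≤ 27 * 27 ^ n := by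
  have hbound : 3 * (3 * n + 2).factorial ≤ 27 * 27 ^ n * (n + 1).factorial ^ 3 :=
    calc 3 * (3 * n + 2).factorial ≤ (3 * n + 2 + 1) * (3 * n + 2).factorial := by gcongr; omega
      _ = (3 * (n + 1)).factorial := (Nat.factorial_succ _).symm
      _ ≤ 27 * 27 ^ n * (n + 1).factorial ^ 3 := by
        rw [← pow_succ']; exact factorial_three_mul_le (n + 1)
  rw [localP2c, show 3 * (n + 1) - 1 = 3 * n + 2 by omega, div_le_iff₀ (by positivity)]
  exact_mod_cast hbound

lemma localP2c_succ_succ_mul (n : ℕ) :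
    localP2c (n + 2) * ((n : ℝ) + 2) ^ 3 =
      3 * ((3 * ((n : ℝ) + 1) + 2) * (3 * ((n : ℝ) + 1) + 1) * ((n : ℝ) + 1)) *
        localP2c (n + 1) := by
  rw [localP2c, localP2c, show 3 * (n + 2) - 1 = 3 * n + 2 + 1 + 1 + 1 by omega,
    show 3 * (n + 1) - 1 = 3 * n + 2 by omega]
  simp only [Nat.factorial_succ (3 * n + 2 + 1 + 1), Nat.factorial_succ (3 * n + 2 + 1),
    Nat.factorial_succ (3 * n + 2), Nat.factorial_succ (n + 1)]
  have : (0 : ℝ) < (n + 1).factorial := by exact_mod_cast Nat.factorial_pos _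
  push_cast
  field_simp
  ring

noncomputable def w1tildeCoeff (n : ℕ) : ℝ := (-1) ^ (n + 1) * localP2c (n + 1)

lemma w1tilde_eq_thetaPowSeries : w1tilde = thetaPowSeries w1tildeCoeff 0 :=
  funext fun z => tsum_congr fun n => by rw [w1tildeCoeff, neg_pow]; ring

lemma norm_w1tildeCoeff_le (n : ℕ) : ‖w1tildeCoeff n‖ ≤ 27 * 27 ^ n := by
  rw [w1tildeCoeff, norm_mul, norm_pow, norm_neg, norm_one, one_pow, one_mul,
    Real.norm_of_nonneg (by unfold localP2c; positivity)]
  exact localP2c_succ_le n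

lemma w1tildeCoeff_zero : w1tildeCoeff 0 = -6 := by
  norm_num [w1tildeCoeff, localP2c, Nat.factorial]

lemma w1tildeCoeff_succ_mul (n : ℕ) :
    w1tildeCoeff (n + 1) * ((n : ℝ) + 2) ^ 3 =
      -3 * ((3 * ((n : ℝ) + 1) + 2) * (3 * ((n : ℝ) + 1) + 1) * ((n : ℝ) + 1)) *
        w1tildeCoeff n := by
  rw [w1tildeCoeff, w1tildeCoeff, mul_assoc, localP2c_succ_succ_mul, pow_succ _ (n + 1)]
  ring

section LocalP2

variable {z : ℝ}

lemma mul_abs_lt_one_of_mem_Ioo (hz : z ∈ Ioo (0 : ℝ) (1 / 27)) : 27 * |z| < 1 := by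
  rw [abs_of_pos hz.1]; linarith [hz.2]

lemma differentiableAt_thetaPowSeries_w1tildeCoeff (k : ℕ) (hz : z ∈ Ioo (0 : ℝ) (1 / 27)) :
    DifferentiableAt ℝ (thetaPowSeries w1tildeCoeff k) z :=
  (hasDerivAt_thetaPowSeries (by norm_num) norm_w1tildeCoeff_le k
    (mul_abs_lt_one_of_mem_Ioo hz)).differentiableAt

lemma theta_thetaPowSeries_w1tildeCoeff (k : ℕ) (hz : z ∈ Ioo (0 : ℝ) (1 / 27)) :
    theta (thetaPowSeries w1tildeCoeff k) z = thetaPowSeries w1tildeCoeff (k + 1) z :=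
  theta_thetaPowSeries (by norm_num) norm_w1tildeCoeff_le k (mul_abs_lt_one_of_mem_Ioo hz)

lemma theta_w1_eqOn :
    EqOn (theta w1) (fun z => 1 + thetaPowSeries w1tildeCoeff 1 z) (Ioo 0 (1 / 27)) := by
  intro z hz
  have hw1 : w1 = fun y => log y + thetaPowSeries w1tildeCoeff 0 y := by
    rw [← w1tilde_eq_thetaPowSeries]; rfl
  rw [hw1, theta_add (differentiableAt_log hz.1.ne')
    (differentiableAt_thetaPowSeries_w1tildeCoeff 0 hz), theta_log hz.1.ne',
    theta_thetaPowSeries_w1tildeCoeff 0 hz]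

lemma theta_theta_w1_eqOn :
    EqOn (theta (theta w1)) (thetaPowSeries w1tildeCoeff 2) (Ioo 0 (1 / 27)) := fun z hz => by
  rw [theta_eqOn isOpen_Ioo theta_w1_eqOn hz, theta_const_add,
    theta_thetaPowSeries_w1tildeCoeff 1 hz]

lemma theta_theta_theta_w1 (hz : z ∈ Ioo (0 : ℝ) (1 / 27)) :
    theta (theta (theta w1)) z = thetaPowSeries w1tildeCoeff 3 z := by
  rw [theta_eqOn isOpen_Ioo theta_theta_w1_eqOn hz, theta_thetaPowSeries_w1tildeCoeff 2 hz]

lemma pf1_eqOn : EqOn pf1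
    (fun z => 3 * thetaPowSeries w1tildeCoeff 2 z + (1 + thetaPowSeries w1tildeCoeff 1 z))
    (Ioo 0 (1 / 27)) := fun z hz => by
  rw [pf1, theta_theta_w1_eqOn hz, theta_w1_eqOn hz]

lemma pf2_eq (hz : z ∈ Ioo (0 : ℝ) (1 / 27)) :
    pf2 z = 9 * thetaPowSeries w1tildeCoeff 3 z + 9 * thetaPowSeries w1tildeCoeff 2 z +
      2 * thetaPowSeries w1tildeCoeff 1 z + 2 := by
  have htheta_pf1 : theta pf1 z =
      3 * thetaPowSeries w1tildeCoeff 3 z + thetaPowSeries w1tildeCoeff 2 z := by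
    rw [theta_eqOn isOpen_Ioo pf1_eqOn hz,
      theta_add ((differentiableAt_thetaPowSeries_w1tildeCoeff 2 hz).const_mul 3)
        ((differentiableAt_thetaPowSeries_w1tildeCoeff 1 hz).const_add 1),
      theta_const_mul, theta_const_add, theta_thetaPowSeries_w1tildeCoeff 2 hz,
      theta_thetaPowSeries_w1tildeCoeff 1 hz]
  rw [pf2, htheta_pf1, pf1_eqOn hz]
  ring

lemma thetaPowSeries_w1tildeCoeff_picardFuchs (hz : z ∈ Ioo (0 : ℝ) (1 / 27)) :
    thetaPowSeries w1tildeCoeff 3 z + 3 * z * (9 * thetaPowSeries w1tildeCoeff 3 z +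
      9 * thetaPowSeries w1tildeCoeff 2 z + 2 * thetaPowSeries w1tildeCoeff 1 z + 2) = 0 := by
  set a := w1tildeCoeff
  have hsum (k : ℕ) : Summable fun n : ℕ => a n * ((n : ℝ) + 1) ^ k * z ^ (n + 1) :=
    summable_thetaPowSeries (by norm_num) norm_w1tildeCoeff_le k (mul_abs_lt_one_of_mem_Ioo hz)
  set Q := ∑' n : ℕ, a n * ((3 * ((n : ℝ) + 1) + 2) * (3 * ((n : ℝ) + 1) + 1) * ((n : ℝ) + 1)) *
    z ^ (n + 1)
  have hcombine : 9 * thetaPowSeries a 3 z + 9 * thetaPowSeries a 2 z +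
      2 * thetaPowSeries a 1 z = Q := by
    simp only [thetaPowSeries, ← tsum_mul_left]
    rw [← ((hsum 3).mul_left 9).tsum_add ((hsum 2).mul_left 9),
      ← (((hsum 3).mul_left 9).add ((hsum 2).mul_left 9)).tsum_add ((hsum 1).mul_left 2)]
    exact tsum_congr fun n => by ring
  have hshift : thetaPowSeries a 3 z = -6 * z - 3 * z * Q := by
    rw [thetaPowSeries, (hsum 3).tsum_eq_zero_add, ← tsum_mul_left, sub_eq_add_neg, ← tsum_neg]
    congr 1
    · simp [a, w1tildeCoeff_zero]
    · refine tsum_congr fun n => ?_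
      rw [show ((n + 1 : ℕ) : ℝ) + 1 = (n : ℝ) + 2 by push_cast; ring, w1tildeCoeff_succ_mul]
      ring
  rw [hcombine, hshift]
  ring

end LocalP2

theorem picard_fuchs_w1 :
    ∀ z ∈ Set.Ioo (0 : ℝ) (1 / 27),
      theta (theta (theta w1)) z + 3 * z * pf2 z = 0 := by
  intro z hz
  rw [theta_theta_theta_w1 hz, pf2_eq hz]
  exact thetaPowSeries_w1tildeCoeff_picardFuchs hz
end
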